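/- Let ξ ∈ Φ. If ψ̂(ξ) ≤ 0 then ψ̂(g(ξ)) < 0; that is, the subset of Φ on which ψ̂ ≤ 0 is mapped by g into the subset on which ψ̂ < 0. -/
import Mathlib

noncomputable section

/-- The parameter region `Φ`: `τ_L > δ_L + 1`, `δ_L > 0`, `τ_R < -(δ_R + 1)`, `δ_R > 0`. -/
def PhiSet : Set (ℝ × ℝ × ℝ × ℝ) :=
  {ξ | ξ.1 > ξ.2.1 + 1 ∧ 0 < ξ.2.1 ∧ ξ.2.2.1 < -(ξ.2.2.2 + 1) ∧ 0 < ξ.2.2.2}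

/-- The renormalisation operator `g`. -/
def gmap (ξ : ℝ × ℝ × ℝ × ℝ) : ℝ × ℝ × ℝ × ℝ :=
  (ξ.2.2.1 ^ 2 - 2 * ξ.2.2.2, ξ.2.2.2 ^ 2, ξ.1 * ξ.2.2.1 - ξ.2.1 - ξ.2.2.2, ξ.2.1 * ξ.2.2.2)

/-- The unstable eigenvalue `λ_R^u` of `A_R`. -/
def lamRu (ξ : ℝ × ℝ × ℝ × ℝ) : ℝ := (ξ.2.2.1 - Real.sqrt (ξ.2.2.1 ^ 2 - 4 * ξ.2.2.2)) / 2

/-- The stable eigenvalue `λ_R^s` of `A_R`. -/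
def lamRs (ξ : ℝ × ℝ × ℝ × ℝ) : ℝ := (ξ.2.2.1 + Real.sqrt (ξ.2.2.1 ^ 2 - 4 * ξ.2.2.2)) / 2

/-- The function `ψ̂(ξ) = -δ_L((λ_R^u)² - 1) + λ_R^u((λ_R^u)² - 1)τ_L + (1 - δ_R)(λ_R^u)²`. -/
def psiHat (ξ : ℝ × ℝ × ℝ × ℝ) : ℝ :=
  -ξ.2.1 * ((lamRu ξ) ^ 2 - 1) + lamRu ξ * ((lamRu ξ) ^ 2 - 1) * ξ.1
    + (1 - ξ.2.2.2) * (lamRu ξ) ^ 2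

set_option maxHeartbeats 2000000
set_option maxRecDepth 8000

/-- Basic facts about the unstable root of `x² - t x + d` when `t < -(d+1)`, `d > 0`. -/
lemma lam_facts (t d : ℝ) (hd : 0 < d) (ht : t < -(d + 1)) :
    ((t - Real.sqrt (t ^ 2 - 4 * d)) / 2) ^ 2
      = t * ((t - Real.sqrt (t ^ 2 - 4 * d)) / 2) - d ∧
    (t - Real.sqrt (t ^ 2 - 4 * d)) / 2 < -1 := by
  have hdisc : (0:ℝ) ≤ t ^ 2 - 4 * d := by nlinarith [sq_nonneg (d - 1)]
  have hs := Real.sq_sqrt hdisc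
  have hs0 := Real.sqrt_nonneg (t ^ 2 - 4 * d)
  set s := Real.sqrt (t ^ 2 - 4 * d) with hsdef
  constructor
  · nlinarith [hs]
  · nlinarith [hs, hs0, sq_nonneg (s + t + 2), sq_nonneg (s - t - 2)]

lemma sub1u (u m : ℝ) (hu : 1 < u) (hm : 1 < m) (hmu : u < m^2) :
    0 < (u-1)*(u*m-u-m)*(u*m+u+m) + u^2*m^2 := by
  rcases le_or_gt (u + m) (u*m) with h | h
  · nlinarith [mul_pos (mul_pos (sub_pos.2 hu) (sub_pos.2 hm)) (by positivity : (0:ℝ) < u*m)]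
  · nlinarith [mul_pos (sub_pos.2 hu) (sub_pos.2 hm), sq_nonneg (u*m - u - m),
      mul_pos (sub_pos.2 hu) (sub_pos.2 hmu), mul_pos (sub_pos.2 hm) (sub_pos.2 hmu),
      sq_nonneg (u - m), sq_nonneg (u*m - 1),
      mul_pos (mul_pos (sub_pos.2 hu) (sub_pos.2 hm)) (sub_pos.2 hmu)]

lemma sub3' (a m : ℝ) (ha : 1 < a) (ham : a < m) (ham2 : m < a + 1) :
    0 ≤ m*(a^2-1)*(a^4*m^2-(a^2+m)^2) + (a^2-1)*(a^2+m)^2*(m^2-1)*(m-a)^2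
      + a^4*m^3*(1-(m-a)^2) := by
  have ha' : (0:ℝ) ≤ a := by linarith
  have hm' : (0:ℝ) ≤ m := by linarith
  have he : (0:ℝ) ≤ a - 1 := by linarith
  have hf : (0:ℝ) ≤ m - a := by linarith
  have hg : (0:ℝ) ≤ a + 1 - m := by linarith
  rcases le_or_gt (a^2 + m) (a^2*m) with h | h
  · have hs : (0:ℝ) ≤ a^2*m - a^2 - m := by linarith
    linarith [(pow_nonneg hm' 9),
    (mul_nonneg (mul_nonneg (pow_nonneg hf 1) (pow_nonneg ha' 5)) (pow_nonneg hm' 4)),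
    (mul_nonneg (mul_nonneg (pow_nonneg hf 1) (pow_nonneg ha' 8)) (pow_nonneg hm' 1)),
    (mul_nonneg (pow_nonneg hg 1) (pow_nonneg hm' 9)),
    (mul_nonneg (mul_nonneg (pow_nonneg hg 1) (pow_nonneg ha' 3)) (pow_nonneg hm' 6)),
    (pow_nonneg hs 1),
    (mul_nonneg (pow_nonneg hs 1) (pow_nonneg hm' 6)),
    (mul_nonneg (pow_nonneg hs 2) (pow_nonneg hm' 1)),
    (mul_nonneg (pow_nonneg hs 2) (pow_nonneg hm' 3)),
    (mul_nonneg (pow_nonneg he 3) (pow_nonneg hm' 5)),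
    (mul_nonneg (pow_nonneg he 3) (pow_nonneg hm' 6)),
    (mul_nonneg (mul_nonneg (pow_nonneg he 2) (pow_nonneg hf 1)) (pow_nonneg hm' 7)),
    (mul_nonneg (pow_nonneg he 1) (pow_nonneg hg 2)),
    (mul_nonneg (mul_nonneg (mul_nonneg (pow_nonneg he 1) (pow_nonneg hg 1)) (pow_nonneg hs 1)) (pow_nonneg hm' 4)),
    (mul_nonneg (mul_nonneg (pow_nonneg hf 2) (pow_nonneg hs 1)) (pow_nonneg hm' 5)),
    (mul_nonneg (pow_nonneg hg 3) (pow_nonneg hm' 7)),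
    (pow_nonneg he 4),
    (mul_nonneg (pow_nonneg he 4) (pow_nonneg hm' 1)),
    (mul_nonneg (pow_nonneg he 4) (pow_nonneg hm' 3)),
    (mul_nonneg (pow_nonneg he 4) (pow_nonneg hm' 4)),
    (mul_nonneg (pow_nonneg he 4) (pow_nonneg ha' 1)),
    (mul_nonneg (mul_nonneg (pow_nonneg he 4) (pow_nonneg ha' 1)) (pow_nonneg hm' 2)),
    (mul_nonneg (mul_nonneg (pow_nonneg he 4) (pow_nonneg ha' 1)) (pow_nonneg hm' 3)),
    (mul_nonneg (mul_nonneg (pow_nonneg he 4) (pow_nonneg ha' 1)) (pow_nonneg hm' 4)),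
    (mul_nonneg (pow_nonneg he 4) (pow_nonneg ha' 2)),
    (mul_nonneg (mul_nonneg (pow_nonneg he 4) (pow_nonneg ha' 2)) (pow_nonneg hm' 1)),
    (mul_nonneg (mul_nonneg (pow_nonneg he 4) (pow_nonneg ha' 3)) (pow_nonneg hm' 1)),
    (mul_nonneg (pow_nonneg he 4) (pow_nonneg ha' 5)),
    (mul_nonneg (mul_nonneg (mul_nonneg (pow_nonneg he 3) (pow_nonneg hf 1)) (pow_nonneg ha' 1)) (pow_nonneg hm' 5)),
    (mul_nonneg (mul_nonneg (pow_nonneg he 3) (pow_nonneg hf 1)) (pow_nonneg ha' 4)),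
    (mul_nonneg (mul_nonneg (pow_nonneg he 3) (pow_nonneg hg 1)) (pow_nonneg hm' 1)),
    (mul_nonneg (mul_nonneg (pow_nonneg he 3) (pow_nonneg hg 1)) (pow_nonneg hm' 6)),
    (mul_nonneg (mul_nonneg (mul_nonneg (pow_nonneg he 3) (pow_nonneg hg 1)) (pow_nonneg ha' 4)) (pow_nonneg hm' 2)),
    (mul_nonneg (mul_nonneg (pow_nonneg he 3) (pow_nonneg hg 1)) (pow_nonneg ha' 5)),
    (mul_nonneg (mul_nonneg (mul_nonneg (pow_nonneg he 2) (pow_nonneg hf 2)) (pow_nonneg ha' 5)) (pow_nonneg hm' 1)),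
    (mul_nonneg (mul_nonneg (mul_nonneg (pow_nonneg he 2) (pow_nonneg hf 1)) (pow_nonneg hg 1)) (pow_nonneg ha' 6)),
    (mul_nonneg (mul_nonneg (mul_nonneg (mul_nonneg (pow_nonneg he 2) (pow_nonneg hg 1)) (pow_nonneg hs 1)) (pow_nonneg ha' 1)) (pow_nonneg hm' 3)),
    (mul_nonneg (mul_nonneg (pow_nonneg he 1) (pow_nonneg hg 3)) (pow_nonneg hm' 6)),
    (mul_nonneg (mul_nonneg (pow_nonneg he 1) (pow_nonneg hg 2)) (pow_nonneg hs 1)),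
    (mul_nonneg (pow_nonneg hf 4) (pow_nonneg hm' 6)),
    (mul_nonneg (mul_nonneg (pow_nonneg hf 4) (pow_nonneg ha' 1)) (pow_nonneg hm' 5)),
    (mul_nonneg (mul_nonneg (pow_nonneg hf 4) (pow_nonneg ha' 3)) (pow_nonneg hm' 2)),
    (mul_nonneg (mul_nonneg (pow_nonneg hf 4) (pow_nonneg ha' 4)) (pow_nonneg hm' 2)),
    (mul_nonneg (mul_nonneg (mul_nonneg (pow_nonneg hf 2) (pow_nonneg hg 2)) (pow_nonneg ha' 2)) (pow_nonneg hm' 4)),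
    (mul_nonneg (mul_nonneg (pow_nonneg hf 1) (pow_nonneg hg 3)) (pow_nonneg hm' 4)),
    (mul_nonneg (mul_nonneg (mul_nonneg (pow_nonneg hf 1) (pow_nonneg hg 3)) (pow_nonneg ha' 5)) (pow_nonneg hm' 1)),
    (pow_nonneg hg 4),
    (mul_nonneg (pow_nonneg hg 4) (pow_nonneg hm' 1)),
    (mul_nonneg (pow_nonneg hg 4) (pow_nonneg hm' 3)),
    (mul_nonneg (pow_nonneg hg 4) (pow_nonneg hm' 6)),
    (mul_nonneg (mul_nonneg (pow_nonneg hg 4) (pow_nonneg ha' 1)) (pow_nonneg hm' 5)),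
    (mul_nonneg (pow_nonneg hg 4) (pow_nonneg ha' 2)),
    (mul_nonneg (mul_nonneg (pow_nonneg hg 4) (pow_nonneg ha' 3)) (pow_nonneg hm' 3)),
    (mul_nonneg (pow_nonneg hg 4) (pow_nonneg ha' 4)),
    (mul_nonneg (mul_nonneg (pow_nonneg hg 4) (pow_nonneg ha' 4)) (pow_nonneg hm' 1)),
    (mul_nonneg (pow_nonneg hg 4) (pow_nonneg ha' 6)),
    (mul_nonneg (pow_nonneg hg 3) (pow_nonneg hs 1)),
    (mul_nonneg (mul_nonneg (pow_nonneg hg 3) (pow_nonneg hs 1)) (pow_nonneg hm' 2)),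
    (mul_nonneg (mul_nonneg (pow_nonneg hg 3) (pow_nonneg hs 1)) (pow_nonneg hm' 3)),
    (mul_nonneg (mul_nonneg (pow_nonneg hg 3) (pow_nonneg hs 1)) (pow_nonneg hm' 4)),
    (mul_nonneg (mul_nonneg (mul_nonneg (pow_nonneg hg 3) (pow_nonneg hs 1)) (pow_nonneg ha' 2)) (pow_nonneg hm' 2)),
    (mul_nonneg (mul_nonneg (pow_nonneg hg 3) (pow_nonneg hs 1)) (pow_nonneg ha' 4)),
    (mul_nonneg (pow_nonneg hg 2) (pow_nonneg hs 2)),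
    (mul_nonneg (mul_nonneg (pow_nonneg hg 2) (pow_nonneg hs 2)) (pow_nonneg ha' 1)),
    (mul_nonneg (mul_nonneg (mul_nonneg (pow_nonneg hg 2) (pow_nonneg hs 2)) (pow_nonneg ha' 1)) (pow_nonneg hm' 1))]
  · have hs : (0:ℝ) ≤ a^2 + m - a^2*m := by linarith
    linarith [(pow_nonneg hg 1),
    (mul_nonneg (pow_nonneg he 2) (pow_nonneg hm' 8)),
    (mul_nonneg (pow_nonneg he 2) (pow_nonneg ha' 8)),
    (mul_nonneg (mul_nonneg (pow_nonneg he 1) (pow_nonneg hf 1)) (pow_nonneg hm' 8)),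
    (mul_nonneg (mul_nonneg (pow_nonneg hf 1) (pow_nonneg hg 1)) (pow_nonneg hm' 8)),
    (mul_nonneg (pow_nonneg he 3) (pow_nonneg hm' 7)),
    (mul_nonneg (mul_nonneg (pow_nonneg he 2) (pow_nonneg hg 1)) (pow_nonneg hm' 7)),
    (mul_nonneg (mul_nonneg (pow_nonneg he 2) (pow_nonneg hs 1)) (pow_nonneg hm' 5)),
    (mul_nonneg (mul_nonneg (mul_nonneg (pow_nonneg hf 1) (pow_nonneg hg 1)) (pow_nonneg hs 1)) (pow_nonneg hm' 4)),
    (mul_nonneg (mul_nonneg (pow_nonneg hg 1) (pow_nonneg hs 2)) (pow_nonneg hm' 3)),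
    (pow_nonneg he 4),
    (mul_nonneg (pow_nonneg he 4) (pow_nonneg hm' 1)),
    (mul_nonneg (pow_nonneg he 4) (pow_nonneg hm' 3)),
    (mul_nonneg (pow_nonneg he 4) (pow_nonneg hm' 4)),
    (mul_nonneg (pow_nonneg he 4) (pow_nonneg hm' 6)),
    (mul_nonneg (pow_nonneg he 4) (pow_nonneg ha' 1)),
    (mul_nonneg (mul_nonneg (pow_nonneg he 4) (pow_nonneg ha' 1)) (pow_nonneg hm' 3)),
    (mul_nonneg (mul_nonneg (pow_nonneg he 4) (pow_nonneg ha' 1)) (pow_nonneg hm' 4)),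
    (mul_nonneg (mul_nonneg (pow_nonneg he 4) (pow_nonneg ha' 1)) (pow_nonneg hm' 5)),
    (mul_nonneg (pow_nonneg he 4) (pow_nonneg ha' 2)),
    (mul_nonneg (pow_nonneg he 4) (pow_nonneg ha' 3)),
    (mul_nonneg (mul_nonneg (pow_nonneg he 4) (pow_nonneg ha' 3)) (pow_nonneg hm' 1)),
    (mul_nonneg (mul_nonneg (pow_nonneg he 4) (pow_nonneg ha' 3)) (pow_nonneg hm' 2)),
    (mul_nonneg (pow_nonneg he 4) (pow_nonneg ha' 6)),
    (mul_nonneg (mul_nonneg (pow_nonneg he 3) (pow_nonneg hf 1)) (pow_nonneg ha' 6)),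
    (mul_nonneg (mul_nonneg (pow_nonneg he 3) (pow_nonneg hg 1)) (pow_nonneg hm' 1)),
    (mul_nonneg (pow_nonneg he 3) (pow_nonneg hs 1)),
    (mul_nonneg (mul_nonneg (pow_nonneg he 3) (pow_nonneg hs 1)) (pow_nonneg hm' 4)),
    (mul_nonneg (mul_nonneg (mul_nonneg (pow_nonneg he 3) (pow_nonneg hs 1)) (pow_nonneg ha' 3)) (pow_nonneg hm' 1)),
    (mul_nonneg (mul_nonneg (mul_nonneg (pow_nonneg he 2) (pow_nonneg hf 2)) (pow_nonneg ha' 3)) (pow_nonneg hm' 3)),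
    (mul_nonneg (mul_nonneg (mul_nonneg (pow_nonneg he 2) (pow_nonneg hf 2)) (pow_nonneg ha' 5)) (pow_nonneg hm' 1)),
    (mul_nonneg (mul_nonneg (pow_nonneg he 2) (pow_nonneg hg 2)) (pow_nonneg hm' 5)),
    (mul_nonneg (mul_nonneg (pow_nonneg he 2) (pow_nonneg hg 2)) (pow_nonneg hm' 6)),
    (mul_nonneg (mul_nonneg (pow_nonneg he 2) (pow_nonneg hs 2)) (pow_nonneg hm' 2)),
    (mul_nonneg (mul_nonneg (pow_nonneg he 2) (pow_nonneg hs 2)) (pow_nonneg ha' 1)),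
    (mul_nonneg (mul_nonneg (mul_nonneg (pow_nonneg he 1) (pow_nonneg hf 3)) (pow_nonneg ha' 2)) (pow_nonneg hm' 4)),
    (mul_nonneg (mul_nonneg (mul_nonneg (pow_nonneg he 1) (pow_nonneg hf 2)) (pow_nonneg hg 1)) (pow_nonneg hm' 6)),
    (mul_nonneg (mul_nonneg (mul_nonneg (mul_nonneg (pow_nonneg he 1) (pow_nonneg hf 2)) (pow_nonneg hg 1)) (pow_nonneg ha' 4)) (pow_nonneg hm' 2)),
    (mul_nonneg (pow_nonneg he 1) (pow_nonneg hg 3)),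
    (mul_nonneg (mul_nonneg (pow_nonneg he 1) (pow_nonneg hg 1)) (pow_nonneg hs 2)),
    (mul_nonneg (pow_nonneg hf 2) (pow_nonneg hg 2)),
    (mul_nonneg (mul_nonneg (pow_nonneg hf 2) (pow_nonneg hg 2)) (pow_nonneg hm' 6)),
    (mul_nonneg (mul_nonneg (mul_nonneg (pow_nonneg hf 2) (pow_nonneg hg 2)) (pow_nonneg ha' 1)) (pow_nonneg hm' 2)),
    (mul_nonneg (mul_nonneg (mul_nonneg (pow_nonneg hf 2) (pow_nonneg hg 2)) (pow_nonneg ha' 1)) (pow_nonneg hm' 5)),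
    (mul_nonneg (mul_nonneg (mul_nonneg (pow_nonneg hf 2) (pow_nonneg hg 2)) (pow_nonneg ha' 2)) (pow_nonneg hm' 4)),
    (mul_nonneg (mul_nonneg (pow_nonneg hf 2) (pow_nonneg hg 2)) (pow_nonneg ha' 3)),
    (mul_nonneg (mul_nonneg (mul_nonneg (pow_nonneg hf 2) (pow_nonneg hg 2)) (pow_nonneg ha' 3)) (pow_nonneg hm' 2)),
    (mul_nonneg (mul_nonneg (pow_nonneg hf 2) (pow_nonneg hg 2)) (pow_nonneg ha' 6)),
    (mul_nonneg (mul_nonneg (pow_nonneg hf 1) (pow_nonneg hg 3)) (pow_nonneg hm' 1)),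
    (mul_nonneg (mul_nonneg (pow_nonneg hf 1) (pow_nonneg hg 3)) (pow_nonneg hm' 2)),
    (mul_nonneg (mul_nonneg (pow_nonneg hf 1) (pow_nonneg hg 3)) (pow_nonneg hm' 3)),
    (mul_nonneg (mul_nonneg (pow_nonneg hf 1) (pow_nonneg hg 3)) (pow_nonneg hm' 4)),
    (mul_nonneg (mul_nonneg (pow_nonneg hf 1) (pow_nonneg hg 3)) (pow_nonneg hm' 5)),
    (mul_nonneg (mul_nonneg (pow_nonneg hf 1) (pow_nonneg hg 3)) (pow_nonneg ha' 2)),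
    (mul_nonneg (mul_nonneg (mul_nonneg (pow_nonneg hf 1) (pow_nonneg hg 3)) (pow_nonneg ha' 3)) (pow_nonneg hm' 3)),
    (mul_nonneg (mul_nonneg (pow_nonneg hf 1) (pow_nonneg hg 3)) (pow_nonneg ha' 5)),
    (mul_nonneg (mul_nonneg (mul_nonneg (pow_nonneg hf 1) (pow_nonneg hg 3)) (pow_nonneg ha' 5)) (pow_nonneg hm' 1)),
    (mul_nonneg (mul_nonneg (mul_nonneg (mul_nonneg (pow_nonneg hf 1) (pow_nonneg hg 2)) (pow_nonneg hs 1)) (pow_nonneg ha' 2)) (pow_nonneg hm' 2)),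
    (mul_nonneg (mul_nonneg (mul_nonneg (pow_nonneg hf 1) (pow_nonneg hg 2)) (pow_nonneg hs 1)) (pow_nonneg ha' 4)),
    (mul_nonneg (mul_nonneg (mul_nonneg (pow_nonneg hf 1) (pow_nonneg hg 1)) (pow_nonneg hs 2)) (pow_nonneg hm' 1)),
    (mul_nonneg (mul_nonneg (pow_nonneg hg 4) (pow_nonneg ha' 2)) (pow_nonneg hm' 2)),
    (mul_nonneg (pow_nonneg hg 3) (pow_nonneg hs 1)),
    (mul_nonneg (pow_nonneg hg 2) (pow_nonneg hs 2)),
    (mul_nonneg (mul_nonneg (mul_nonneg (pow_nonneg hg 2) (pow_nonneg hs 2)) (pow_nonneg ha' 1)) (pow_nonneg hm' 1)),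
    (mul_nonneg (pow_nonneg hg 1) (pow_nonneg hs 3))]

lemma core2 (a m d2 D : ℝ) (ha : 1 < a) (hm : 1 < m) (hd2 : 0 < d2) (hd2a : d2 < a)
    (hD : 0 < D)
    (Hs : 0 ≤ a^2*m*(m*(a^2-1) - (a^2 - d2^2)) + D*(a^2-1)*(a^2+m))
    (H2w : (D + d2)*(a^2 + d2) < a*m*d2) :
    0 < (m^2-1)*(m*(a^4+d2^2)+d2^2*a^2) + D*m^2*a^2 - m^2*a^2 := by
  have ha0 : (0:ℝ) < a := by linarith
  have hm0 : (0:ℝ) < m := by linarith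
  have h1 : 0 < d2*(a*m - a^2 - d2) := by
    nlinarith [mul_pos hD (show (0:ℝ) < a^2 + d2 by positivity)]
  have hma : 0 < a*m - a^2 - d2 := by
    by_contra hc
    push_neg at hc
    nlinarith [mul_nonpos_of_nonneg_of_nonpos hd2.le hc]
  have ham : a < m := by
    by_contra hc
    push_neg at hc
    nlinarith [mul_le_mul_of_nonneg_left hc ha0.le]
  have hu : (1:ℝ) < a^2 := by nlinarith
  -- P > 0
  have hI := sub1u (a^2) m hu hm (by nlinarith)
  have hP : 0 < (a^2-1)*a^6*m*(m^2-1) - 2*a^4*m^2*(a^2-1) - a^2*m^3*(a^2-1) + a^6*m^3 := by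
    nlinarith [mul_pos (mul_pos (show (0:ℝ) < a^2 by positivity) hm0) hI]
  -- E := P + Q * d2^2 > 0
  have hE : 0 < ((a^2-1)*a^6*m*(m^2-1) - 2*a^4*m^2*(a^2-1) - a^2*m^3*(a^2-1) + a^6*m^3)
      + ((a^2-1)*(a^2+m)^2*(m^2-1) - a^4*m^3)*d2^2 := by
    rcases le_or_gt 0 ((a^2-1)*(a^2+m)^2*(m^2-1) - a^4*m^3) with hQ | hQ
    · nlinarith [mul_nonneg hQ (sq_nonneg d2)]
    · rcases le_or_gt (a + 1) m with hm2 | hm2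
      · -- P + Q a² = a²(a²-1) J ≥ 0 with J > 0
        have hJ : 0 < a^4*m^3 + (a^2+m)^2*(m^2-m-1) := by
          nlinarith [mul_pos (show (0:ℝ) < (a^2+m)^2 by positivity)
            (show (0:ℝ) < m^2 - m - 1 by nlinarith),
            mul_pos (pow_pos ha0 4) (pow_pos hm0 3)]
        have h3 : 0 < a^2*(a^2-1)*(a^4*m^3 + (a^2+m)^2*(m^2-m-1)) :=
          mul_pos (mul_pos (by positivity) (by nlinarith)) hJ
        have h4 : 0 < (a^2 - d2^2) * (-((a^2-1)*(a^2+m)^2*(m^2-1) - a^4*m^3)) :=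
          mul_pos (by nlinarith) (by linarith)
        nlinarith [h3, h4]
      · -- P + Q (am-a²)² = a² X ≥ 0
        have hX := sub3' a m ha ham hm2
        have h3 : 0 ≤ a^2 * (m*(a^2-1)*(a^4*m^2-(a^2+m)^2) + (a^2-1)*(a^2+m)^2*(m^2-1)*(m-a)^2
            + a^4*m^3*(1-(m-a)^2)) := mul_nonneg (by positivity) hX
        have h4 : 0 < ((a*m - a^2)^2 - d2^2) * (-((a^2-1)*(a^2+m)^2*(m^2-1) - a^4*m^3)) :=
          mul_pos (by nlinarith) (by linarith)
        nlinarith [h3, h4]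
  -- combine with Hs
  have h5 : 0 ≤ m^2*a^2 * (a^2*m*(m*(a^2-1) - (a^2 - d2^2)) + D*(a^2-1)*(a^2+m)) :=
    mul_nonneg (by positivity) Hs
  have h6 : 0 < ((m^2-1)*(m*(a^4+d2^2)+d2^2*a^2) + D*m^2*a^2 - m^2*a^2)
      * ((a^2-1)*(a^2+m)) := by nlinarith [hE, h5]
  have hfac : 0 < (a^2-1)*(a^2+m) := mul_pos (by nlinarith) (by positivity)
  by_contra hc
  push_neg at hc
  nlinarith [mul_nonneg (neg_nonneg.2 hc) hfac.le]

/-- The core polynomial inequality (square roots eliminated). -/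
lemma core (L M d1 d2 : ℝ) (hL : L < -1) (hM : M < -1) (hd1 : 0 < d1) (hd2 : 0 < d2)
    (hLd2 : d2 < -L) (hMD : d1 * d2 < -M)
    (H : (d1 * (L ^ 2 - 1) - (1 - d2) * L ^ 2) * (L ^ 2 + d2) * M
        ≤ L ^ 2 * (L ^ 2 - 1) * (M ^ 2 + d1 * d2 + (d1 + d2) * M))
    (H2 : L * (M ^ 2 + d1 * d2 + (d1 + d2) * M) < (d1 + 1) * (L ^ 2 + d2) * M) :
    (M ^ 2 - 1) * (M * (L ^ 4 + d2 ^ 2) - d2 ^ 2 * L ^ 2) + (1 - d1 * d2) * M ^ 2 * L ^ 2 < 0 := by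
  have hm0 : (0:ℝ) < -M := by linarith
  have ha0 : (0:ℝ) < -L := by linarith
  -- a = -L, m = -M
  -- H2 in positive form: a (m-d1)(m-d2) > m (d1+1)(a²+d2)
  have hH2' : (-M) * ((d1+1) * (L^2 + d2)) < (-L) * (((-M) - d1) * ((-M) - d2)) := by
    nlinarith [H2]
  -- d1 < m and d2 < m
  have hd1m : d1 < -M := by
    by_contra hc
    push_neg at hc
    have hd2' : d2 < 1 := by nlinarith
    nlinarith [mul_pos (mul_pos ha0 (show (0:ℝ) < d1 - (-M) + 1 by linarith))
      (show (0:ℝ) < (-M) by linarith), mul_pos hm0 (mul_pos (show (0:ℝ) < d1+1 by linarith)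
      (show (0:ℝ) < L^2 + d2 by positivity)),
      mul_nonneg (mul_nonneg ha0.le (show (0:ℝ) ≤ d1 - (-M) by linarith))
        (show (0:ℝ) ≤ (-M) - d2 by nlinarith)]
  have hd2m : d2 < -M := by
    by_contra hc
    push_neg at hc
    have hd1' : d1 < 1 := by nlinarith
    nlinarith [mul_pos hm0 (mul_pos (show (0:ℝ) < d1+1 by linarith)
      (show (0:ℝ) < L^2 + d2 by positivity)),
      mul_nonneg (mul_nonneg ha0.le (show (0:ℝ) ≤ (-M) - d1 by nlinarith))
        (show (0:ℝ) ≤ d2 - (-M) by linarith)]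
  -- weaken H2': a m > (d1+1)(a²+d2), then multiply by d2
  have hW : (d1+1) * (L^2 + d2) < (-L) * (-M) := by
    have hsq : ((-M) - d1) * ((-M) - d2) ≤ (-M) * (-M) := by nlinarith
    have := mul_le_mul_of_nonneg_left hsq ha0.le
    have hmpos : (0:ℝ) < -M := hm0
    nlinarith [hH2']
  have H2w : (d1*d2 + d2) * ((-L)^2 + d2) < (-L) * (-M) * d2 := by
    nlinarith [mul_lt_mul_of_pos_right hW hd2]
  -- Hs from H : H slack = m * Hs
  have Hs : 0 ≤ (-L)^2*(-M)*((-M)*((-L)^2-1) - ((-L)^2 - d2^2)) + (d1*d2)*((-L)^2-1)*((-L)^2+(-M)) := by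
    by_contra hc
    push_neg at hc
    nlinarith [mul_pos hm0 (show (0:ℝ) < -((-L)^2*(-M)*((-M)*((-L)^2-1) - ((-L)^2 - d2^2)) + (d1*d2)*((-L)^2-1)*((-L)^2+(-M))) by linarith)]
  have hG := core2 (-L) (-M) d2 (d1*d2) (by linarith) (by linarith) hd2 hLd2
    (mul_pos hd1 hd2) Hs H2w
  nlinarith [hG]

/-- Proposition 6.3: for `ξ ∈ Φ`, if `ψ̂(ξ) ≤ 0` then `ψ̂(g(ξ)) < 0`. -/
theorem psiHat_nonpos_invariant (ξ : ℝ × ℝ × ℝ × ℝ) (hξ : ξ ∈ PhiSet)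
    (hψ : psiHat ξ ≤ 0) :
    psiHat (gmap ξ) < 0 := by
  obtain ⟨t1, d1, t2, d2⟩ := ξ
  obtain ⟨ht1, hd1, ht2, hd2⟩ := hξ
  simp only [PhiSet, Set.mem_setOf_eq] at ht1 hd1 ht2 hd2
  simp only [psiHat, lamRu, gmap] at hψ ⊢
  obtain ⟨hLsq, hLlt⟩ := lam_facts t2 d2 hd2 ht2
  have hD : (0:ℝ) < d1 * d2 := mul_pos hd1 hd2
  have hT : t1 * t2 - d1 - d2 < -(d1 * d2 + 1) := by nlinarith
  obtain ⟨hMsq, hMlt⟩ := lam_facts (t1 * t2 - d1 - d2) (d1 * d2) hD hT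
  set L : ℝ := (t2 - Real.sqrt (t2 ^ 2 - 4 * d2)) / 2 with hLdef
  set M : ℝ := (t1 * t2 - d1 - d2 - Real.sqrt ((t1 * t2 - d1 - d2) ^ 2 - 4 * (d1 * d2))) / 2
    with hMdef
  clear_value L M
  have hL0 : L < 0 := by linarith
  have hM0 : M < 0 := by linarith
  have hL2 : (0:ℝ) < L ^ 2 := by nlinarith
  have ht2L : t2 * L = L ^ 2 + d2 := by linarith [hLsq]
  have hTM : (t1 * t2 - d1 - d2) * M = M ^ 2 + d1 * d2 := by linarith [hMsq]
  have hLd2 : d2 < -L := by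
    nlinarith [mul_lt_mul_of_neg_right ht2 hL0,
      mul_pos (show (0:ℝ) < -(L+1) by linarith) (show (0:ℝ) < -L by linarith)]
  have hMD : d1 * d2 < -M := by
    nlinarith [mul_lt_mul_of_neg_right hT hM0,
      mul_pos (show (0:ℝ) < -(M+1) by linarith) (show (0:ℝ) < -M by linarith)]
  have ht2neg : t2 < 0 := by linarith
  have ht2M : 0 < t2 * M := mul_pos_of_neg_of_neg ht2neg hM0
  have H : (d1 * (L ^ 2 - 1) - (1 - d2) * L ^ 2) * (L ^ 2 + d2) * M
      ≤ L ^ 2 * (L ^ 2 - 1) * (M ^ 2 + d1 * d2 + (d1 + d2) * M) := by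
    have h1 : L * (L ^ 2 - 1) * t1 ≤ d1 * (L ^ 2 - 1) - (1 - d2) * L ^ 2 := by linarith
    have h2 : L * (L ^ 2 - 1) * t1 * (t2 * M)
        ≤ (d1 * (L ^ 2 - 1) - (1 - d2) * L ^ 2) * (t2 * M) :=
      mul_le_mul_of_nonneg_right h1 ht2M.le
    have h5 := mul_le_mul_of_nonpos_left h2 hL0.le
    have h3 : L * (L * (L ^ 2 - 1) * t1 * (t2 * M))
        = L ^ 2 * (L ^ 2 - 1) * (M ^ 2 + d1 * d2 + (d1 + d2) * M) := by
      linear_combination (L ^ 2 * (L ^ 2 - 1)) * hTM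
    have h4 : (d1 * (L ^ 2 - 1) - (1 - d2) * L ^ 2) * (L ^ 2 + d2) * M
        = L * ((d1 * (L ^ 2 - 1) - (1 - d2) * L ^ 2) * (t2 * M)) := by
      linear_combination (-((d1 * (L ^ 2 - 1) - (1 - d2) * L ^ 2)) * M) * ht2L
    linarith [h3, h4, h5]
  have H2 : L * (M ^ 2 + d1 * d2 + (d1 + d2) * M) < (d1 + 1) * (L ^ 2 + d2) * M := by
    have h1 : (d1 + 1) * (t2 * M) < t1 * (t2 * M) := mul_lt_mul_of_pos_right ht1 ht2M
    have h5 := mul_lt_mul_of_neg_left h1 (show L < 0 from hL0)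
    have h6 : L * (t1 * (t2 * M)) = L * (M ^ 2 + d1 * d2 + (d1 + d2) * M) := by
      linear_combination L * hTM
    have h7 : L * ((d1 + 1) * (t2 * M)) = (d1 + 1) * (L ^ 2 + d2) * M := by
      linear_combination ((d1 + 1) * M) * ht2L
    linarith [h5, h6, h7]
  have key := core L M d1 d2 hLlt hMlt hd1 hd2 hLd2 hMD H H2
  -- psiHat (gmap ξ) * L² equals the core expression, using t2 L = L² + d2
  have hgoal : (-d2 ^ 2 * (M ^ 2 - 1) + M * (M ^ 2 - 1) * (t2 ^ 2 - 2 * d2)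
      + (1 - d1 * d2) * M ^ 2) * L ^ 2
      = (M ^ 2 - 1) * (M * (L ^ 4 + d2 ^ 2) - d2 ^ 2 * L ^ 2) + (1 - d1 * d2) * M ^ 2 * L ^ 2 := by
    linear_combination (M * (M ^ 2 - 1) * (t2 * L + L ^ 2 + d2)) * ht2L
  by_contra hc
  push_neg at hc
  nlinarith [mul_nonneg hc hL2.le, hgoal, key]

end
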